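/- Regard 𝓔 as a function of (d₁₂, d₂₃, d₃₁). At the equilateral point d₁₂ = d₂₃ = d₃₁ = d > 0 with angular momentum satisfying H² = I_H²/d³ (I_H evaluated at this point), the second partial derivative ∂²𝓔/∂d_ij² equals (m_i m_j/(d³ I_H)) [ (m_i m_j − 3 m_k (m_i + m_j)) d² − 3 I_S ] for each pair {i, j} with complementary index k. Moreover, if 0 < m₃ ≤ m₂ ≤ m₁ then m₂ m₃ − 3 m₁ (m₂ + m₃) < 0, so ∂²𝓔/∂d₂₃² < 0; hence the Hessian of 𝓔 at the Lagrange orbital configuration is never positive definite, i.e., the Lagrange orbital configurations are always energetically unstable. -/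

import Mathlib

/-!
Freezing two of the distances at `d`, the amended potential becomes, in the remaining distance
`x = d_ij`, the function `H²/(2(a x² + c)) − a/x − k` with `a = m_i m_j` and
`c = m_k (m_i + m_j) d² + I_S`. Its second derivative is `−2a/x³ − H² a (c − 3ax²)/(ax² + c)³`,
which at the Lagrange orbit `H² = (ad² + c)²/d³` collapses to `a (ad² − 3c)/(d³ I_H)`.
For the pair of the two lightest bodies `ad² − 3c < 0`, and a positive definite matrix
has no negative diagonal entry.
-/

/-- Moment of inertia as a function of the three mutual distances. -/
noncomputable def IH3 (m1 m2 m3 IS d12 d23 d31 : ℝ) : ℝ :=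
  m1 * m2 * d12 ^ 2 + m2 * m3 * d23 ^ 2 + m3 * m1 * d31 ^ 2 + IS

/-- The amended potential `𝓔 = H²/(2 I_H) + U` as a function of the three
mutual distances. -/
noncomputable def amended3 (m1 m2 m3 IS H d12 d23 d31 : ℝ) : ℝ :=
  H ^ 2 / (2 * IH3 m1 m2 m3 IS d12 d23 d31)
    - (m1 * m2 / d12 + m2 * m3 / d23 + m3 * m1 / d31)

noncomputable def amendedSlice (a c k H x : ℝ) : ℝ :=
  H ^ 2 / (2 * (a * x ^ 2 + c)) - (a / x + k)

section AmendedSlice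

variable {a c : ℝ} (k H : ℝ)

theorem hasDerivAt_amendedSlice (ha : 0 ≤ a) (hc : 0 < c) {x : ℝ} (hx : x ≠ 0) :
    HasDerivAt (amendedSlice a c k H)
      (a / x ^ 2 - H ^ 2 * a * x / (a * x ^ 2 + c) ^ 2) x := by
  have hI : a * x ^ 2 + c ≠ 0 := by positivity
  have hDen : HasDerivAt (fun y => 2 * (a * y ^ 2 + c)) (2 * (a * (2 * x))) x := by
    simpa using (((hasDerivAt_pow 2 x).const_mul a).add_const c).const_mul 2
  have hPot : HasDerivAt (fun y => a / y + k) (-a / x ^ 2) x := by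
    simpa using ((hasDerivAt_const x a).div (hasDerivAt_id x) hx).add_const k
  refine (((hasDerivAt_const x (H ^ 2)).fun_div hDen (by positivity)).fun_sub hPot).congr_deriv ?_
  field_simp
  ring

theorem deriv_deriv_amendedSlice (ha : 0 ≤ a) (hc : 0 < c) {x : ℝ} (hx : x ≠ 0) :
    deriv (deriv (amendedSlice a c k H)) x =
      -(2 * a) / x ^ 3 - H ^ 2 * a * (c - 3 * a * x ^ 2) / (a * x ^ 2 + c) ^ 3 := by
  have hderiv : deriv (amendedSlice a c k H) =ᶠ[nhds x]
      fun y => a / y ^ 2 - H ^ 2 * a * y / (a * y ^ 2 + c) ^ 2 := by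
    filter_upwards [eventually_ne_nhds hx] with y hy
    exact (hasDerivAt_amendedSlice k H ha hc hy).deriv
  have hI : a * x ^ 2 + c ≠ 0 := by positivity
  have hInvSq : HasDerivAt (fun y => a / y ^ 2) (-(a * (2 * x)) / (x ^ 2) ^ 2) x := by
    simpa using (hasDerivAt_const x a).fun_div (hasDerivAt_pow 2 x) (pow_ne_zero 2 hx)
  have hDenSq : HasDerivAt (fun y => (a * y ^ 2 + c) ^ 2)
      (2 * (a * x ^ 2 + c) * (a * (2 * x))) x := by
    simpa using (((hasDerivAt_pow 2 x).const_mul a).add_const c).fun_pow 2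
  have hNum : HasDerivAt (fun y => H ^ 2 * a * y) (H ^ 2 * a) x := by
    simpa using (hasDerivAt_id x).const_mul (H ^ 2 * a)
  rw [hderiv.deriv_eq, (hInvSq.fun_sub (hNum.fun_div hDenSq (pow_ne_zero 2 hI))).deriv]
  field_simp
  ring

theorem deriv_deriv_amendedSlice_of_relEquilibrium (ha : 0 ≤ a) (hc : 0 < c) {d : ℝ}
    (hd : 0 < d) (hH : H ^ 2 = (a * d ^ 2 + c) ^ 2 / d ^ 3) :
    deriv (deriv (amendedSlice a c k H)) d =
      a / (d ^ 3 * (a * d ^ 2 + c)) * (a * d ^ 2 - 3 * c) := by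
  have hI : a * d ^ 2 + c ≠ 0 := by positivity
  rw [deriv_deriv_amendedSlice k H ha hc hd.ne', hH]
  field_simp
  ring

end AmendedSlice

section Rotation

variable (m1 m2 m3 IS H : ℝ)

theorem IH3_rotate (d12 d23 d31 : ℝ) :
    IH3 m1 m2 m3 IS d12 d23 d31 = IH3 m2 m3 m1 IS d23 d31 d12 := by
  unfold IH3; ring

theorem amended3_rotate (d12 d23 d31 : ℝ) :
    amended3 m1 m2 m3 IS H d12 d23 d31 = amended3 m2 m3 m1 IS H d23 d31 d12 := by
  unfold amended3; rw [IH3_rotate]; ring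

end Rotation

theorem amended3_eq_amendedSlice (m1 m2 m3 IS H d x : ℝ) :
    amended3 m1 m2 m3 IS H x d d =
      amendedSlice (m1 * m2) (m3 * (m1 + m2) * d ^ 2 + IS) (m2 * m3 / d + m3 * m1 / d) H x := by
  unfold amended3 IH3 amendedSlice; ring

theorem deriv_deriv_amended3_fst {m1 m2 m3 IS d : ℝ} (H : ℝ) (hm1 : 0 < m1) (hm2 : 0 < m2)
    (hm3 : 0 < m3) (hIS : 0 < IS) (hd : 0 < d)
    (hequil : H ^ 2 = (IH3 m1 m2 m3 IS d d d) ^ 2 / d ^ 3) :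
    deriv (deriv (fun x => amended3 m1 m2 m3 IS H x d d)) d =
      m1 * m2 / (d ^ 3 * IH3 m1 m2 m3 IS d d d) *
        ((m1 * m2 - 3 * m3 * (m1 + m2)) * d ^ 2 - 3 * IS) := by
  have hIH : IH3 m1 m2 m3 IS d d d = m1 * m2 * d ^ 2 + (m3 * (m1 + m2) * d ^ 2 + IS) := by
    unfold IH3; ring
  simp only [amended3_eq_amendedSlice]
  rw [hIH] at hequil ⊢
  rw [deriv_deriv_amendedSlice_of_relEquilibrium _ H (by positivity) (by positivity) hd hequil]
  ring

theorem mul_sub_three_mul_mul_add_neg {m1 m2 m3 : ℝ} (hm2 : 0 < m2) (hm3 : 0 < m3)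
    (h21 : m2 ≤ m1) : m2 * m3 - 3 * m1 * (m2 + m3) < 0 := by
  nlinarith [mul_le_mul_of_nonneg_right h21 hm3.le]

theorem lagrange_orbital_unstable_general
    (m1 m2 m3 IS H d : ℝ)
    (hm1 : 0 < m1) (hm2 : 0 < m2) (hm3 : 0 < m3) (hIS : 0 < IS) (hd : 0 < d)
    (hequil : H ^ 2 = (IH3 m1 m2 m3 IS d d d) ^ 2 / d ^ 3) :
    (deriv (deriv (fun x => amended3 m1 m2 m3 IS H x d d)) d =
        m1 * m2 / (d ^ 3 * IH3 m1 m2 m3 IS d d d) *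
          ((m1 * m2 - 3 * m3 * (m1 + m2)) * d ^ 2 - 3 * IS)) ∧
    (deriv (deriv (fun x => amended3 m1 m2 m3 IS H d x d)) d =
        m2 * m3 / (d ^ 3 * IH3 m1 m2 m3 IS d d d) *
          ((m2 * m3 - 3 * m1 * (m2 + m3)) * d ^ 2 - 3 * IS)) ∧
    (deriv (deriv (fun x => amended3 m1 m2 m3 IS H d d x)) d =
        m3 * m1 / (d ^ 3 * IH3 m1 m2 m3 IS d d d) *
          ((m3 * m1 - 3 * m2 * (m3 + m1)) * d ^ 2 - 3 * IS)) ∧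
    (m3 ≤ m2 → m2 ≤ m1 →
      m2 * m3 - 3 * m1 * (m2 + m3) < 0 ∧
      deriv (deriv (fun x => amended3 m1 m2 m3 IS H d x d)) d < 0 ∧
      ∀ M : Matrix (Fin 3) (Fin 3) ℝ,
        M 1 1 = deriv (deriv (fun x => amended3 m1 m2 m3 IS H d x d)) d →
        ¬ M.PosDef) := by
  have h12 := deriv_deriv_amended3_fst H hm1 hm2 hm3 hIS hd hequil
  have h23 : deriv (deriv (fun x => amended3 m1 m2 m3 IS H d x d)) d =
      m2 * m3 / (d ^ 3 * IH3 m1 m2 m3 IS d d d) *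
        ((m2 * m3 - 3 * m1 * (m2 + m3)) * d ^ 2 - 3 * IS) := by
    rw [IH3_rotate] at hequil ⊢
    simpa only [amended3_rotate m1 m2 m3] using
      deriv_deriv_amended3_fst H hm2 hm3 hm1 hIS hd hequil
  have h31 : deriv (deriv (fun x => amended3 m1 m2 m3 IS H d d x)) d =
      m3 * m1 / (d ^ 3 * IH3 m1 m2 m3 IS d d d) *
        ((m3 * m1 - 3 * m2 * (m3 + m1)) * d ^ 2 - 3 * IS) := by
    rw [IH3_rotate, IH3_rotate] at hequil ⊢
    simpa only [amended3_rotate m1 m2 m3, amended3_rotate m2 m3 m1] using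
      deriv_deriv_amended3_fst H hm3 hm1 hm2 hIS hd hequil
  refine ⟨h12, h23, h31, fun _ h21 => ?_⟩
  have hcoeff := mul_sub_three_mul_mul_add_neg hm2 hm3 h21
  have hneg : deriv (deriv (fun x => amended3 m1 m2 m3 IS H d x d)) d < 0 := by
    rw [h23]
    exact mul_neg_of_pos_of_neg (by unfold IH3; positivity)
      (sub_neg.mpr ((mul_neg_of_neg_of_pos hcoeff (by positivity)).trans (by positivity)))
  exact ⟨hcoeff, hneg, fun M hM hPD => (hM ▸ hPD.diag_pos).not_gt hneg⟩

/-- At the Lagrange orbital configuration (`d₁₂ = d₂₃ = d₃₁ = d`,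
`H² = I_H²/d³`) the diagonal second partials of `𝓔` are
`∂²𝓔/∂d_ij² = (m_i m_j/(d³ I_H))[(m_i m_j − 3 m_k(m_i+m_j))d² − 3 I_S]`;
if `0 < m₃ ≤ m₂ ≤ m₁` then `m₂m₃ − 3m₁(m₂+m₃) < 0`, so `∂²𝓔/∂d₂₃² < 0` and
the Hessian of `𝓔` there is never positive definite: the Lagrange orbital
configurations are always energetically unstable. -/
theorem lagrange_orbital_unstable
    (m1 m2 m3 IS H d : ℝ)
    (hm1 : 0 < m1) (hm2 : 0 < m2) (hm3 : 0 < m3) (hIS : 0 < IS) (hd : 0 < d)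
    (hH : 0 ≤ H)
    (hequil : H ^ 2 = (IH3 m1 m2 m3 IS d d d) ^ 2 / d ^ 3) :
    (deriv (deriv (fun x => amended3 m1 m2 m3 IS H x d d)) d =
        m1 * m2 / (d ^ 3 * IH3 m1 m2 m3 IS d d d) *
          ((m1 * m2 - 3 * m3 * (m1 + m2)) * d ^ 2 - 3 * IS)) ∧
    (deriv (deriv (fun x => amended3 m1 m2 m3 IS H d x d)) d =
        m2 * m3 / (d ^ 3 * IH3 m1 m2 m3 IS d d d) *
          ((m2 * m3 - 3 * m1 * (m2 + m3)) * d ^ 2 - 3 * IS)) ∧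
    (deriv (deriv (fun x => amended3 m1 m2 m3 IS H d d x)) d =
        m3 * m1 / (d ^ 3 * IH3 m1 m2 m3 IS d d d) *
          ((m3 * m1 - 3 * m2 * (m3 + m1)) * d ^ 2 - 3 * IS)) ∧
    (m3 ≤ m2 → m2 ≤ m1 →
      m2 * m3 - 3 * m1 * (m2 + m3) < 0 ∧
      deriv (deriv (fun x => amended3 m1 m2 m3 IS H d x d)) d < 0 ∧
      ∀ M : Matrix (Fin 3) (Fin 3) ℝ,
        M 1 1 = deriv (deriv (fun x => amended3 m1 m2 m3 IS H d x d)) d →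
        ¬ M.PosDef) :=
  lagrange_orbital_unstable_general m1 m2 m3 IS H d hm1 hm2 hm3 hIS hd hequil
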